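/- arXiv:2308.14121 — 4 statements merged into one kernel-verified Lean document; each statement's English description precedes it below -/
import Mathlib

section
/- Let T be a locally compact, separable and metrisable topological space. Then M^T is a G_δ subset of the metric space (C(T²), ρ_T), and consequently (M^T, ρ_T) is completely metrisable. -/
/-- `d` is a metric (as a raw function). -/
def IsMetric {T : Type*} (d : T → T → ℝ) : Prop :=
  (∀ x y, d x y = 0 ↔ x = y) ∧ (∀ x y, d x y = d y x) ∧ ∀ x y z, d x z ≤ d x y + d y z

/-- `d` induces the topology of `T`. -/
def Compatible (T : Type*) [TopologicalSpace T] (d : T → T → ℝ) : Prop :=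
  ∀ s : Set T, IsOpen s ↔ ∀ x ∈ s, ∃ ε > 0, ∀ y, d x y < ε → y ∈ s

/-- `d` is a proper metric on `T` compatible with its topology, i.e. `d ∈ M^T`. -/
def ProperCompatMetric (T : Type*) [TopologicalSpace T] (d : T → T → ℝ) : Prop :=
  IsMetric d ∧ Compatible T d ∧ ∀ (x : T) (r : ℝ), IsCompact {y : T | d x y ≤ r}

/-- The uniform (truncated) distance `ρ_T` on functions on `T²`. -/
noncomputable def rhoT (T : Type*) (f g : T → T → ℝ) : ℝ :=
  ⨆ p : T × T, min 1 |f p.1 p.2 - g p.1 p.2|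

/-- `f` is `K`-Lipschitz with respect to the raw metric `d`. -/
def LipWith {M : Type*} (d : M → M → ℝ) (K : ℝ) (f : M → ℝ) : Prop :=
  ∀ x y, |f x - f y| ≤ K * d x y

variable (T : Type*) [TopologicalSpace T]

/-- The space `C(T²)` of continuous real-valued functions on `T × T`. -/
@[ext]
structure CT2 where
  toFun : T × T → ℝ
  continuous_toFun : Continuous toFun

private lemma iSup_const_zero {ι : Sort*} : ⨆ _ : ι, (0 : ℝ) = 0 := by
  rcases isEmpty_or_nonempty ι with h | h
  · exact Real.iSup_of_isEmpty _
  · exact ciSup_const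

private lemma min_one_bdd (f g : CT2 T) :
    BddAbove (Set.range fun p : T × T => min 1 |f.toFun p - g.toFun p|) :=
  ⟨1, by rintro r ⟨p, rfl⟩; exact min_le_left _ _⟩

private lemma min_one_subadd {x y z : ℝ} (h : |x - z| ≤ |x - y| + |y - z|) :
    min 1 |x - z| ≤ min 1 |x - y| + min 1 |y - z| := by
  rcases le_total 1 |x - y| with h1 | h1
  · have : min 1 |x - y| = 1 := min_eq_left h1
    calc min 1 |x - z| ≤ 1 := min_le_left _ _
    _ ≤ min 1 |x - y| + min 1 |y - z| := by
        rw [this]; linarith [le_min zero_le_one (abs_nonneg (x - y)),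
          le_min zero_le_one (abs_nonneg (y - z))]
  · rcases le_total 1 |y - z| with h2 | h2
    · have : min 1 |y - z| = 1 := min_eq_left h2
      calc min 1 |x - z| ≤ 1 := min_le_left _ _
      _ ≤ min 1 |x - y| + min 1 |y - z| := by
          rw [this]; linarith [le_min zero_le_one (abs_nonneg (x - y)),
          le_min zero_le_one (abs_nonneg (y - z))]
    · rw [min_eq_right h1, min_eq_right h2]
      exact le_trans (min_le_right _ _) h

/-- The metric `ρ_T` of uniform convergence on `C(T²)`. -/
noncomputable instance : MetricSpace (CT2 T) where
  dist f g := ⨆ p : T × T, min 1 |f.toFun p - g.toFun p|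
  dist_self f := by
    have : ∀ p : T × T, min 1 |f.toFun p - f.toFun p| = 0 := by intro p; simp
    simp only [this]; exact iSup_const_zero
  dist_comm f g := by
    have : (fun p : T × T => min 1 |f.toFun p - g.toFun p|)
        = fun p : T × T => min 1 |g.toFun p - f.toFun p| := by
      funext p; rw [abs_sub_comm]
    show (⨆ p : T × T, min 1 |f.toFun p - g.toFun p|)
        = ⨆ p : T × T, min 1 |g.toFun p - f.toFun p|
    rw [this]
  dist_triangle f g h := by
    show (⨆ p : T × T, min 1 |f.toFun p - h.toFun p|)
        ≤ (⨆ p : T × T, min 1 |f.toFun p - g.toFun p|)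
          + ⨆ p : T × T, min 1 |g.toFun p - h.toFun p|
    have h0 : (0 : ℝ) ≤ (⨆ p : T × T, min 1 |f.toFun p - g.toFun p|)
        + ⨆ p : T × T, min 1 |g.toFun p - h.toFun p| :=
      add_nonneg (Real.iSup_nonneg fun p => le_min zero_le_one (abs_nonneg _))
        (Real.iSup_nonneg fun p => le_min zero_le_one (abs_nonneg _))
    refine Real.iSup_le (fun p => ?_) h0
    calc min 1 |f.toFun p - h.toFun p|
        ≤ min 1 |f.toFun p - g.toFun p| + min 1 |g.toFun p - h.toFun p| :=
          min_one_subadd (abs_sub_le _ _ _)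
      _ ≤ _ := add_le_add (le_ciSup (min_one_bdd T f g) p) (le_ciSup (min_one_bdd T g h) p)
  eq_of_dist_eq_zero := by
    intro f g h
    ext p
    have hp : min 1 |f.toFun p - g.toFun p| ≤ 0 := h ▸ le_ciSup (min_one_bdd T f g) p
    have h0 : (0 : ℝ) ≤ min 1 |f.toFun p - g.toFun p| := le_min zero_le_one (abs_nonneg _)
    have hmin : min 1 |f.toFun p - g.toFun p| = 0 := le_antisymm hp h0
    have habs : |f.toFun p - g.toFun p| = 0 := by
      rcases le_total 1 |f.toFun p - g.toFun p| with h1 | h1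
      · rw [min_eq_left h1] at hmin; norm_num at hmin
      · rw [min_eq_right h1] at hmin; exact hmin
    have := abs_eq_zero.mp habs
    linarith [this]

open Set Topology TopologicalSpace

theorem gdelta_completelyMetrizable {X : Type*} [MetricSpace X] [CompleteSpace X] {S : Set X}
    (hS : IsGδ S) :
    ∃ m : MetricSpace S, m.toUniformSpace.toTopologicalSpace =
      (inferInstance : TopologicalSpace S) ∧ @CompleteSpace S m.toUniformSpace := by
  obtain ⟨U, hUopen, hSU⟩ := isGδ_iff_eq_iInter_nat.1 hS
  subst hSU
  set O : ℕ → Opens X := fun n => ⟨U n, hUopen n⟩ with hO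
  letI : MetricSpace (∀ n, Opens.CompleteCopy (O n)) := PiCountable.metricSpace
  haveI : CompleteSpace (∀ n, Opens.CompleteCopy (O n)) := Pi.complete _
  set S : Set X := ⋂ n, U n with hSdef
  have hmem : ∀ (s : S) (n : ℕ), (s : X) ∈ O n := fun s n => Set.mem_iInter.1 s.2 n
  set Φ : S → X × (∀ n, Opens.CompleteCopy (O n)) :=
    fun s => (s.1, fun n => (⟨s.1, hmem s n⟩ : O n)) with hΦ
  have hinj : Function.Injective Φ := fun a b h => Subtype.ext (congrArg Prod.fst h)
  have hcont : Continuous Φ := by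
    refine Continuous.prodMk continuous_subtype_val (continuous_pi fun n => ?_)
    exact Continuous.subtype_mk continuous_subtype_val _
  have hind : Topology.IsInducing Φ := by
    refine Topology.IsInducing.of_comp hcont continuous_fst ?_
    exact Topology.IsInducing.subtypeVal
  set v : ∀ n, Opens.CompleteCopy (O n) → X := fun n z => (show ↥(O n) from z).1 with hv
  have hvcont : ∀ n, Continuous (v n) := fun n => continuous_subtype_val
  have hclosed : IsClosed (Set.range Φ) := by
    have hrange : Set.range Φ = ⋂ n, {y : X × (∀ n, Opens.CompleteCopy (O n)) |
        (v n (y.2 n)) = y.1} := by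
      ext y
      constructor
      · rintro ⟨s, rfl⟩
        exact Set.mem_iInter.2 fun n => rfl
      · intro hy
        have hy' := Set.mem_iInter.1 hy
        have hyS : y.1 ∈ S := Set.mem_iInter.2 fun n => by
          have : v n (y.2 n) ∈ O n := (show ↥(O n) from y.2 n).2
          rw [hy' n] at this
          exact this
        exact ⟨⟨y.1, hyS⟩, Prod.ext rfl (funext fun n => Subtype.ext (hy' n).symm)⟩
    rw [hrange]
    exact isClosed_iInter fun n => isClosed_eq
      ((hvcont n).comp ((continuous_apply n).comp continuous_snd)) continuous_fst
  refine ⟨MetricSpace.induced Φ hinj inferInstance, ?_, ?_⟩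
  · exact hind.eq_induced.symm
  · have hui : @IsUniformInducing S (X × (∀ n, Opens.CompleteCopy (O n)))
        (MetricSpace.induced Φ hinj inferInstance).toUniformSpace
        PseudoMetricSpace.toUniformSpace Φ :=
      @IsUniformInducing.mk S (X × (∀ n, Opens.CompleteCopy (O n)))
        (MetricSpace.induced Φ hinj inferInstance).toUniformSpace
        PseudoMetricSpace.toUniformSpace Φ rfl
    exact (@completeSpace_iff_isComplete_range S (X × (∀ n, Opens.CompleteCopy (O n)))
      (MetricSpace.induced Φ hinj inferInstance).toUniformSpace
      PseudoMetricSpace.toUniformSpace Φ hui).2 hclosed.isComplete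

open Set Topology Filter

variable {T}

lemma CT2.dist_def (f g : CT2 T) :
    dist f g = ⨆ p : T × T, min 1 |f.toFun p - g.toFun p| := rfl

lemma min_one_lt {a t : ℝ} (h : min 1 a < t) (ht : t ≤ 1) : a < t := by
  rcases le_total 1 a with h1 | h1
  · rw [min_eq_left h1] at h; linarith
  · rwa [min_eq_right h1] at h

lemma CT2.abs_lt_of_dist_lt {f g : CT2 T} {t : ℝ} (h : dist f g < t) (ht : t ≤ 1) (p : T × T) :
    |f.toFun p - g.toFun p| < t :=
  min_one_lt (lt_of_le_of_lt (le_ciSup (min_one_bdd T f g) p) (by rwa [← CT2.dist_def])) ht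

lemma CT2.dist_le_of_forall {f g : CT2 T} {c : ℝ} (hc : 0 ≤ c)
    (h : ∀ p : T × T, |f.toFun p - g.toFun p| ≤ c) : dist f g ≤ c := by
  rw [CT2.dist_def]
  exact Real.iSup_le (fun p => le_trans (min_le_right _ _) (h p)) hc

instance CT2.completeSpace : CompleteSpace (CT2 T) := by
  apply Metric.complete_of_cauchySeq_tendsto
  intro u hu
  rw [Metric.cauchySeq_iff] at hu
  -- pointwise Cauchy
  have hptw : ∀ p : T × T, CauchySeq fun k => (u k).toFun p := by
    intro p
    rw [Metric.cauchySeq_iff]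
    intro ε hε
    obtain ⟨N, hN⟩ := hu (min ε 1) (lt_min hε one_pos)
    refine ⟨N, fun m hm n hn => ?_⟩
    have := CT2.abs_lt_of_dist_lt (hN m hm n hn) (min_le_right _ _) p
    rw [Real.dist_eq]
    exact lt_of_lt_of_le this (min_le_left _ _)
  choose g hg using fun p => cauchySeq_tendsto_of_complete (hptw p)
  -- uniform estimate
  have hunif : ∀ ε : ℝ, 0 < ε → ε ≤ 1 → ∃ N, ∀ n ≥ N, ∀ p : T × T,
      |(u n).toFun p - g p| ≤ ε := by
    intro ε hε hε1
    obtain ⟨N, hN⟩ := hu ε hε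
    refine ⟨N, fun n hn p => ?_⟩
    have htend : Tendsto (fun m => |(u n).toFun p - (u m).toFun p|) atTop
        (𝓝 |(u n).toFun p - g p|) := (tendsto_const_nhds.sub (hg p)).abs
    refine le_of_tendsto htend (eventually_atTop.2 ⟨N, fun m hm => ?_⟩)
    exact le_of_lt (CT2.abs_lt_of_dist_lt (hN n hn m hm) hε1 p)
  -- continuity of the limit
  have hgc : Continuous g := by
    have htu : TendstoUniformly (fun k (p : T × T) => (u k).toFun p) g atTop := by
      rw [Metric.tendstoUniformly_iff]
      intro ε hε
      obtain ⟨N, hN⟩ := hunif (min ε 1 / 2) (by positivity)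
        (by rw [div_le_one (by norm_num : (0:ℝ) < 2)]; nlinarith [min_le_right ε 1])
      refine eventually_atTop.2 ⟨N, fun n hn p => ?_⟩
      have := hN n hn p
      rw [Real.dist_eq, abs_sub_comm]
      calc |(u n).toFun p - g p| ≤ min ε 1 / 2 := this
        _ < ε := by nlinarith [min_le_left ε 1, lt_min hε one_pos]
    exact htu.continuous (Eventually.of_forall fun k => (u k).continuous_toFun).frequently
  refine ⟨⟨g, hgc⟩, ?_⟩
  rw [Metric.tendsto_atTop]
  intro ε hε
  obtain ⟨N, hN⟩ := hunif (min ε 1 / 2) (by positivity)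
    (by rw [div_le_one (by norm_num : (0:ℝ) < 2)]; nlinarith [min_le_right ε 1])
  refine ⟨N, fun n hn => ?_⟩
  have : dist (u n) ⟨g, hgc⟩ ≤ min ε 1 / 2 :=
    CT2.dist_le_of_forall (by positivity) fun p => hN n hn p
  calc dist (u n) ⟨g, hgc⟩ ≤ min ε 1 / 2 := this
    _ < ε := by nlinarith [min_le_left ε 1, lt_min hε one_pos]
lemma CT2.continuous_eval (p : T × T) : Continuous fun f : CT2 T => f.toFun p := by
  rw [Metric.continuous_iff]
  intro f ε hε
  refine ⟨min ε 1, lt_min hε one_pos, fun g hg => ?_⟩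
  rw [Real.dist_eq]
  exact lt_of_lt_of_le (CT2.abs_lt_of_dist_lt hg (min_le_right _ _) p) (min_le_left _ _)

theorem mainGdelta [LocallyCompactSpace T] [TopologicalSpace.SeparableSpace T]
    [TopologicalSpace.MetrizableSpace T] :
    IsGδ {f : CT2 T | ProperCompatMetric T fun x y => f.toFun (x, y)} := by
  rcases isEmpty_or_nonempty T with hT | hT
  · have huniv : {f : CT2 T | ProperCompatMetric T fun x y => f.toFun (x, y)} = Set.univ := by
      refine Set.eq_univ_of_forall fun f => ?_
      refine ⟨⟨fun x => isEmptyElim x, fun x => isEmptyElim x, fun x => isEmptyElim x⟩,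
        fun s => ?_, fun x => isEmptyElim x⟩
      have hs : s = ∅ := Set.eq_empty_of_isEmpty s
      exact iff_of_true (hs ▸ isOpen_empty) (fun x => isEmptyElim x)
    rw [huniv]
    exact IsGδ.univ
  · letI dT : MetricSpace T := TopologicalSpace.metrizableSpaceMetric T
    haveI hsc : SecondCountableTopology T := UniformSpace.secondCountable_of_separable T
    haveI : SigmaCompactSpace T := inferInstance
    let K := CompactExhaustion.choice T
    obtain ⟨x₀⟩ := hT
    set C : Set (CT2 T) := ⋂ (x : T), ⋂ (y : T), ⋂ (z : T),
      {f : CT2 T | f.toFun (x, x) = 0 ∧ f.toFun (x, y) = f.toFun (y, x) ∧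
        f.toFun (x, z) ≤ f.toFun (x, y) + f.toFun (y, z)} with hCdef
    set O1 : ℕ → ℕ → Set (CT2 T) := fun m n =>
      {f : CT2 T | ∃ δ > 0, ∀ x ∈ K m, ∀ y : T, 1 / ((n : ℝ) + 1) ≤ dist x y →
        δ ≤ f.toFun (x, y)} with hO1def
    set O2 : ℕ → Set (CT2 T) := fun r =>
      {f : CT2 T | ∃ c : ℝ, (r : ℝ) < c ∧ ∃ m : ℕ, ∀ y : T, y ∉ K m →
        c ≤ f.toFun (x₀, y)} with hO2def
    have hC : IsClosed C := by
      refine isClosed_iInter fun x => isClosed_iInter fun y => isClosed_iInter fun z => ?_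
      exact IsClosed.inter (isClosed_eq (CT2.continuous_eval _) continuous_const)
        (IsClosed.inter (isClosed_eq (CT2.continuous_eval _) (CT2.continuous_eval _))
          (isClosed_le (CT2.continuous_eval _)
            ((CT2.continuous_eval _).add (CT2.continuous_eval _))))
    have hO1 : ∀ m n, IsOpen (O1 m n) := by
      intro m n
      rw [Metric.isOpen_iff]
      rintro f ⟨δ, hδ, hP⟩
      refine ⟨min δ 1 / 2, by positivity, fun g hg => ?_⟩
      rw [Metric.mem_ball] at hg
      have hle1 : min δ 1 / 2 ≤ 1 := by
        have := min_le_right δ 1; linarith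
      refine ⟨δ - min δ 1 / 2, by have := min_le_left δ 1; have := lt_min hδ one_pos; linarith,
        fun x hx y hy => ?_⟩
      have habs := CT2.abs_lt_of_dist_lt hg hle1 (x, y)
      have hfl := hP x hx y hy
      have := abs_lt.1 habs
      linarith [this.1, this.2]
    have hO2 : ∀ r, IsOpen (O2 r) := by
      intro r
      rw [Metric.isOpen_iff]
      rintro f ⟨c, hc, m, hP⟩
      refine ⟨min (c - r) 1 / 2, by
        have h0 : (0:ℝ) < c - r := by linarith
        positivity, fun g hg => ?_⟩
      rw [Metric.mem_ball] at hg
      have hle1 : min (c - r) 1 / 2 ≤ 1 := by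
        have := min_le_right (c - r) 1; linarith
      refine ⟨c - min (c - r) 1 / 2,
        by have := min_le_left (c - r) 1; have := lt_min (by linarith : (0:ℝ) < c - r) one_pos;
           linarith, m, fun y hy => ?_⟩
      have habs := CT2.abs_lt_of_dist_lt hg hle1 (x₀, y)
      have hfl := hP y hy
      have := abs_lt.1 habs
      linarith [this.1, this.2]
    have heq : {f : CT2 T | ProperCompatMetric T fun x y => f.toFun (x, y)} =
        C ∩ ((⋂ m, ⋂ n, O1 m n) ∩ ⋂ r, O2 r) := by
      ext f
      simp only [Set.mem_setOf_eq, Set.mem_inter_iff, Set.mem_iInter, hCdef]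
      constructor
      · rintro ⟨hmet, hcompat, hproper⟩
        obtain ⟨heq0, hsym, htri⟩ := hmet
        refine ⟨fun x y z => ⟨(heq0 x x).2 rfl, hsym x y, htri x y z⟩, fun m n => ?_,
          fun r => ?_⟩
        · -- O1 membership
          by_contra hcon
          simp only [hO1def, Set.mem_setOf_eq] at hcon
          push_neg at hcon
          have hseq : ∀ k : ℕ, ∃ x, x ∈ K m ∧ ∃ y : T, 1 / ((n : ℝ) + 1) ≤ dist x y ∧
              f.toFun (x, y) < 1 / ((k : ℝ) + 1) := by
            intro k
            obtain ⟨x, hx, y, hy1, hy2⟩ := hcon (1 / ((k : ℝ) + 1)) (by positivity)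
            exact ⟨x, hx, y, hy1, hy2⟩
          choose xs hxs ys hd hfxy using hseq
          obtain ⟨x, hxK, φ, hφ, hxlim⟩ := (K.isCompact m).tendsto_subseq hxs
          obtain ⟨ε, hε, hball⟩ := (hcompat (Metric.ball x (1 / (2 * ((n : ℝ) + 1))))).1
            Metric.isOpen_ball x (Metric.mem_ball_self (by positivity))
          have hev1 : ∀ᶠ k in Filter.atTop, dist (xs (φ k)) x < 1 / (2 * ((n : ℝ) + 1)) := by
            have := Metric.tendsto_atTop.1 hxlim (1 / (2 * ((n : ℝ) + 1))) (by positivity)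
            obtain ⟨N, hN⟩ := this
            exact Filter.eventually_atTop.2 ⟨N, fun k hk => hN k hk⟩
          have hev2 : ∀ᶠ k in Filter.atTop, f.toFun (x, xs (φ k)) < ε / 2 := by
            have htnd : Filter.Tendsto (fun k => f.toFun (x, xs (φ k))) Filter.atTop
                (𝓝 (f.toFun (x, x))) :=
              (f.continuous_toFun.tendsto (x, x)).comp (tendsto_const_nhds.prodMk_nhds hxlim)
            have h00 : f.toFun (x, x) = 0 := (heq0 x x).2 rfl
            rw [h00] at htnd
            exact Filter.Tendsto.eventually_lt_const (by positivity) htnd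
          have hev3 : ∀ᶠ k : ℕ in Filter.atTop, 1 / ((k : ℝ) + 1) < ε / 2 := by
            have := tendsto_one_div_add_atTop_nhds_zero_nat (𝕜 := ℝ)
            exact Filter.Tendsto.eventually_lt_const (by positivity) this
          obtain ⟨k, ⟨hk1, hk2⟩, hk3⟩ := ((hev1.and hev2).and hev3).exists
          have hfy : f.toFun (x, ys (φ k)) < ε := by
            have h1 : f.toFun (x, ys (φ k)) ≤ f.toFun (x, xs (φ k)) +
                f.toFun (xs (φ k), ys (φ k)) := htri x (xs (φ k)) (ys (φ k))
            have h2 : f.toFun (xs (φ k), ys (φ k)) < 1 / ((φ k : ℝ) + 1) := hfxy (φ k)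
            have h3 : 1 / ((φ k : ℝ) + 1) ≤ 1 / ((k : ℝ) + 1) := by
              apply one_div_le_one_div_of_le (by positivity)
              have h4 : (k : ℝ) ≤ (φ k : ℝ) := Nat.cast_le.2 hφ.le_apply
              linarith
            linarith
          have hmem := hball (ys (φ k)) hfy
          rw [Metric.mem_ball] at hmem
          have hd1 : 1 / ((n : ℝ) + 1) ≤ dist (xs (φ k)) (ys (φ k)) := hd (φ k)
          have htr : dist (xs (φ k)) (ys (φ k)) ≤ dist (xs (φ k)) x + dist x (ys (φ k)) :=
            dist_triangle _ _ _
          have h2n : 1 / (2 * ((n : ℝ) + 1)) + 1 / (2 * ((n : ℝ) + 1)) = 1 / ((n : ℝ) + 1) := by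
            have hA : (0:ℝ) < (n : ℝ) + 1 := by positivity
            simp only [one_div]
            rw [mul_inv, ← two_mul, ← mul_assoc, mul_inv_cancel₀ two_ne_zero, one_mul]
          rw [dist_comm (ys (φ k)) x] at hmem
          linarith
        · -- O2 membership
          have hcpt := hproper x₀ ((r : ℝ) + 1)
          obtain ⟨m, hm⟩ := K.exists_superset_of_isCompact hcpt
          refine ⟨(r : ℝ) + 1, by linarith, m, fun y hy => ?_⟩
          by_contra hlt
          push_neg at hlt
          exact hy (hm (le_of_lt hlt))
      · rintro ⟨hc, hO1f, hO2f⟩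
        have heq0 : ∀ x : T, f.toFun (x, x) = 0 := fun x => (hc x x x).1
        have hsym : ∀ x y : T, f.toFun (x, y) = f.toFun (y, x) := fun x y => (hc x y y).2.1
        have htri : ∀ x y z : T, f.toFun (x, z) ≤ f.toFun (x, y) + f.toFun (y, z) :=
          fun x y z => (hc x y z).2.2
        have hpos : ∀ x y : T, x ≠ y → 0 < f.toFun (x, y) := by
          intro x y hxy
          obtain ⟨m, hxm⟩ := K.exists_mem x
          obtain ⟨n, hn⟩ := exists_nat_one_div_lt (dist_pos.2 hxy)
          obtain ⟨δ, hδ, hP⟩ := hO1f m n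
          exact lt_of_lt_of_le hδ (hP x hxm y (le_of_lt hn))
        have hcont1 : ∀ x : T, Continuous fun y : T => f.toFun (x, y) := fun x =>
          f.continuous_toFun.comp (Continuous.prodMk_right x)
        refine ⟨⟨fun x y => ⟨fun h => ?_, fun h => h ▸ heq0 x⟩, hsym, htri⟩, fun s => ?_,
          fun x r => ?_⟩
        · by_contra hne
          exact absurd h (ne_of_gt (hpos x y hne))
        · constructor
          · intro hs x hx
            obtain ⟨m, hxm⟩ := K.exists_mem x
            obtain ⟨ε, hε, hball⟩ := Metric.isOpen_iff.1 hs x hx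
            obtain ⟨n, hn⟩ := exists_nat_one_div_lt hε
            obtain ⟨δ, hδ, hP⟩ := hO1f m n
            refine ⟨δ, hδ, fun y hy => ?_⟩
            have hlt : dist x y < 1 / ((n : ℝ) + 1) := by
              by_contra hge
              push_neg at hge
              exact absurd (hP x hxm y hge) (not_le.2 hy)
            apply hball
            rw [Metric.mem_ball, dist_comm]
            linarith
          · intro h
            rw [isOpen_iff_mem_nhds]
            intro x hx
            obtain ⟨ε, hε, hb⟩ := h x hx
            refine Filter.mem_of_superset ?_ (fun y hy => hb y hy)
            have hopen : IsOpen {y : T | f.toFun (x, y) < ε} :=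
              isOpen_lt (hcont1 x) continuous_const
            exact hopen.mem_nhds (by simp only [Set.mem_setOf_eq, heq0 x]; exact hε)
        · -- properness
          obtain ⟨c, hcN, m, hcP⟩ := hO2f ⌈f.toFun (x₀, x) + r⌉₊
          have hclosed : IsClosed {y : T | f.toFun (x, y) ≤ r} :=
            isClosed_le (hcont1 x) continuous_const
          refine (K.isCompact m).of_isClosed_subset hclosed fun y hy => ?_
          by_contra hyK
          have h1 := hcP y hyK
          have h2 : f.toFun (x₀, y) ≤ f.toFun (x₀, x) + f.toFun (x, y) := htri x₀ x y
          have h3 : f.toFun (x₀, x) + r ≤ (⌈f.toFun (x₀, x) + r⌉₊ : ℝ) := Nat.le_ceil _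
          have hy' : f.toFun (x, y) ≤ r := hy
          linarith
    rw [heq]
    exact IsGδ.inter hC.isGδ (IsGδ.inter
      (IsGδ.iInter fun m => IsGδ.iInter fun n => (hO1 m n).isGδ)
      (IsGδ.iInter fun r => (hO2 r).isGδ))

variable (T)

/-- For a locally compact, separable, metrisable space `T`, the set `M^T` of
proper compatible metrics is a `G_δ` subset of `(C(T²), ρ_T)`, and consequently `M^T` (with the
subspace topology) is completely metrisable. -/
theorem stmt2 [LocallyCompactSpace T] [TopologicalSpace.SeparableSpace T]
    [TopologicalSpace.MetrizableSpace T] :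
    IsGδ {f : CT2 T | ProperCompatMetric T fun x y => f.toFun (x, y)} ∧
      ∃ m : MetricSpace {f : CT2 T // ProperCompatMetric T fun x y => f.toFun (x, y)},
        m.toUniformSpace.toTopologicalSpace =
          (inferInstance :
            TopologicalSpace {f : CT2 T // ProperCompatMetric T fun x y => f.toFun (x, y)}) ∧
        @CompleteSpace {f : CT2 T // ProperCompatMetric T fun x y => f.toFun (x, y)}
          m.toUniformSpace := by
  have h := mainGdelta (T := T)
  exact ⟨h, gdelta_completelyMetrizable h⟩
end

section
/- Let T be a locally compact, separable and metrisable topological space, let d ∈ M^T, and let d' be a metric on the set T which is continuous as a function on T² (with respect to the original topology) and satisfies ρ_T(d, d') < 1. Then d' is a proper metric compatible with the topology of T, i.e. d' ∈ M^T. In particular, writing M* for the set of all metrics on T that are continuous as functions on T², one has ρ_T(d, d') ≥ 1 whenever d ∈ M^T and d' ∈ M* \ M^T. -/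
/-! A metric `d'` at bounded uniform distance `c` from `d` has its closed balls inside the closed
`d`-balls of radius enlarged by `c`. When `d'` is continuous and the `d`-balls are compact, this
makes the `d'`-balls compact and lets one bound `d'(x, ·)` from below by a positive constant on
the compact set of points outside an open set `s ∋ x` that are `d`-close to `x`; hence `d'` is
proper and induces the topology. Since `ρ_T(d, d') < 1` forces `|d - d'| < 1` pointwise, a metric
in the `ρ_T`-ball of radius `1` around `d ∈ M^T` lies in `M^T`. -/

namespace IsMetric

variable {T : Type*} {d : T → T → ℝ}

lemma nonneg (hd : IsMetric d) (x y : T) : 0 ≤ d x y := by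
  have htri := hd.2.2 x y x
  rw [(hd.1 x x).2 rfl, hd.2.1 y x] at htri
  linarith

lemma pos_of_ne (hd : IsMetric d) {x y : T} (hxy : x ≠ y) : 0 < d x y :=
  (hd.nonneg x y).lt_of_ne fun h => hxy ((hd.1 x y).1 h.symm)

end IsMetric

lemma abs_sub_lt_one_of_rhoT_lt_one {T : Type*} {f g : T → T → ℝ} (h : rhoT T f g < 1)
    (x y : T) : |f x y - g x y| < 1 := by
  have hbdd : BddAbove (Set.range fun p : T × T => min 1 |f p.1 p.2 - g p.1 p.2|) :=
    ⟨1, by rintro r ⟨p, rfl⟩; exact min_le_left _ _⟩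
  have hle : min 1 |f x y - g x y| ≤ rhoT T f g := le_ciSup hbdd (x, y)
  by_contra! hge
  rw [min_eq_left hge] at hle
  linarith

lemma closedBall_subset_of_abs_sub_le {T : Type*} {d d' : T → T → ℝ} {c : ℝ}
    (hc : ∀ x y, |d x y - d' x y| ≤ c) (x : T) (r : ℝ) :
    {y | d' x y ≤ r} ⊆ {y | d x y ≤ r + c} := fun y (hy : d' x y ≤ r) =>
  show d x y ≤ r + c by linarith [(abs_le.1 (hc x y)).2]

section BoundedPerturbation

variable {T : Type*} [TopologicalSpace T] {d d' : T → T → ℝ} {c : ℝ}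

lemma isCompact_closedBall_of_abs_sub_le (hK : ∀ x r, IsCompact {y | d x y ≤ r})
    (hcont : ∀ x, Continuous (d' x)) (hc : ∀ x y, |d x y - d' x y| ≤ c) (x : T) (r : ℝ) :
    IsCompact {y | d' x y ≤ r} :=
  (hK x (r + c)).of_isClosed_subset (isClosed_le (hcont x) continuous_const)
    (closedBall_subset_of_abs_sub_le hc x r)

lemma isOpen_of_forall_exists_ball_subset (hcont : ∀ x, Continuous (d' x))
    (hself : ∀ x, d' x x = 0) {s : Set T} (hs : ∀ x ∈ s, ∃ ε > 0, ∀ y, d' x y < ε → y ∈ s) :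
    IsOpen s := by
  refine isOpen_iff_mem_nhds.2 fun x hx => ?_
  obtain ⟨ε, hε, hball⟩ := hs x hx
  have hopen : IsOpen {y | d' x y < ε} := isOpen_lt (hcont x) continuous_const
  exact Filter.mem_of_superset (hopen.mem_nhds (by simpa [hself x] using hε)) hball

lemma exists_ball_subset_of_isOpen (hK : ∀ x r, IsCompact {y | d x y ≤ r}) (hd' : IsMetric d')
    (hcont : ∀ x, Continuous (d' x)) (hc : ∀ x y, |d x y - d' x y| ≤ c) {s : Set T}
    (hs : IsOpen s) {x : T} (hx : x ∈ s) : ∃ ε > 0, ∀ y, d' x y < ε → y ∈ s := by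
  set far := {y | d x y ≤ 1 + c} ∩ sᶜ
  have hfar : IsCompact far := (hK x (1 + c)).inter_right hs.isClosed_compl
  obtain ⟨m, hm, hmfar⟩ := hfar.exists_forall_le' (hcont x).continuousOn
    fun y hy => hd'.pos_of_ne fun hxy => hy.2 (hxy ▸ hx)
  refine ⟨min m 1, lt_min hm one_pos, fun y hy => ?_⟩
  by_contra hys
  have hnear : d x y ≤ 1 + c :=
    closedBall_subset_of_abs_sub_le hc x 1 (hy.le.trans (min_le_right _ _))
  exact (hy.trans_le (min_le_left _ _)).not_ge (hmfar y ⟨hnear, hys⟩)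

lemma compatible_of_abs_sub_le (hK : ∀ x r, IsCompact {y | d x y ≤ r}) (hd' : IsMetric d')
    (hcont : ∀ x, Continuous (d' x)) (hc : ∀ x y, |d x y - d' x y| ≤ c) : Compatible T d' :=
  fun _ => ⟨fun hs _ hx => exists_ball_subset_of_isOpen hK hd' hcont hc hs hx,
    isOpen_of_forall_exists_ball_subset hcont fun x => (hd'.1 x x).2 rfl⟩

lemma ProperCompatMetric.of_abs_sub_le (hK : ∀ x r, IsCompact {y | d x y ≤ r})
    (hd' : IsMetric d') (hcont : ∀ x, Continuous (d' x)) (hc : ∀ x y, |d x y - d' x y| ≤ c) :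
    ProperCompatMetric T d' :=
  ⟨hd', compatible_of_abs_sub_le hK hd' hcont hc, isCompact_closedBall_of_abs_sub_le hK hcont hc⟩

end BoundedPerturbation

lemma ProperCompatMetric.of_rhoT_lt_one {T : Type*} [TopologicalSpace T] {d d' : T → T → ℝ}
    (hd : ProperCompatMetric T d) (hd' : IsMetric d')
    (hcont : Continuous fun p : T × T => d' p.1 p.2) (hlt : rhoT T d d' < 1) :
    ProperCompatMetric T d' :=
  .of_abs_sub_le hd.2.2 hd' (fun _ => hcont.comp (continuous_const.prodMk continuous_id))
    fun x y => (abs_sub_lt_one_of_rhoT_lt_one hlt x y).le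

theorem stmt3_general {T : Type*} [TopologicalSpace T]
    (d : T → T → ℝ) (hd : ProperCompatMetric T d)
    (d' : T → T → ℝ) (hd' : IsMetric d')
    (hcont : Continuous fun p : T × T => d' p.1 p.2)
    (hlt : rhoT T d d' < 1) :
    ProperCompatMetric T d' ∧
      ∀ e e' : T → T → ℝ, ProperCompatMetric T e → IsMetric e' →
        Continuous (fun p : T × T => e' p.1 p.2) → ¬ ProperCompatMetric T e' →
        1 ≤ rhoT T e e' :=
  ⟨.of_rhoT_lt_one hd hd' hcont hlt, fun _ _ he he' he'cont hnot =>
    le_of_not_gt fun hlt' => hnot (.of_rhoT_lt_one he he' he'cont hlt')⟩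

/-- If `d ∈ M^T` and `d'` is a metric on `T`, continuous as a function on `T²`,
with `ρ_T(d, d') < 1`, then `d' ∈ M^T`.  In particular, `ρ_T(e, e') ≥ 1` whenever `e ∈ M^T` and
`e'` is a continuous metric on `T²` not belonging to `M^T`. -/
theorem stmt3 {T : Type*} [TopologicalSpace T] [LocallyCompactSpace T]
    [TopologicalSpace.SeparableSpace T] [TopologicalSpace.MetrizableSpace T]
    (d : T → T → ℝ) (hd : ProperCompatMetric T d)
    (d' : T → T → ℝ) (hd' : IsMetric d')
    (hcont : Continuous fun p : T × T => d' p.1 p.2)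
    (hlt : rhoT T d d' < 1) :
    ProperCompatMetric T d' ∧
      ∀ e e' : T → T → ℝ, ProperCompatMetric T e → IsMetric e' →
        Continuous (fun p : T × T => e' p.1 p.2) → ¬ ProperCompatMetric T e' →
        1 ≤ rhoT T e e' :=
  stmt3_general d hd d' hd' hcont hlt
end

section
/- Let (M,d) be a complete metric space and let A ⊆ M be a nonempty closed bounded subset such that d(A, M\A) > 0. Then the Lipschitz-free space F(A) (canonically identified with a closed subspace of F(M) via the isometric embedding induced by the inclusion A ⊆ M, with base point chosen in A) is complemented in F(M), i.e. there is a bounded linear projection from F(M) onto F(A). -/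
/-- The approximation property of a normed space. -/
def HasAP (X : Type*) [NormedAddCommGroup X] [NormedSpace ℝ X] : Prop :=
  ∀ K : Set X, IsCompact K → ∀ ε : ℝ, 0 < ε →
    ∃ S : X →L[ℝ] X, FiniteDimensional ℝ (LinearMap.range (S : X →ₗ[ℝ] X)) ∧
      ∀ x ∈ K, ‖S x - x‖ ≤ ε

/-- The `λ`-bounded approximation property of a normed space. -/
def HasBAP (lam : ℝ) (X : Type*) [NormedAddCommGroup X] [NormedSpace ℝ X] : Prop :=
  ∀ K : Set X, IsCompact K → ∀ ε : ℝ, 0 < ε →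
    ∃ S : X →L[ℝ] X, FiniteDimensional ℝ (LinearMap.range (S : X →ₗ[ℝ] X)) ∧
      ‖S‖ ≤ lam ∧ ∀ x ∈ K, ‖S x - x‖ ≤ ε

/-- `(X, δ)` is a realization of the Lipschitz-free space of `(M, d)` with base point `x₀`:
`δ x₀ = 0`, the span of `δ(M)` is dense, and the norm of finite combinations of the `δ x` is
given by the supremum of their pairings against the unit ball of `Lip₀(M,d)`. -/
def IsFreeSpace {M : Type*} (d : M → M → ℝ) (x₀ : M) (X : Type*) [NormedAddCommGroup X]
    [NormedSpace ℝ X] [CompleteSpace X] (δ : M → X) : Prop :=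
  δ x₀ = 0 ∧ (Submodule.span ℝ (Set.range δ)).topologicalClosure = ⊤ ∧
    ∀ (s : Finset M) (a : M → ℝ),
      ‖∑ x ∈ s, a x • δ x‖ =
        sSup {r : ℝ | ∃ f : M → ℝ, LipWith d 1 f ∧ f x₀ = 0 ∧ r = ∑ x ∈ s, a x * f x}

universe u

/-- **Statement 5.** Let `M` be a complete metric space and `A ⊆ M` nonempty, closed, bounded
with `d(A, M \ A) > 0`.  In any realization `(X, δ)` of the free space `F(M)` (with base point
`x₀ ∈ A`), the canonical copy of `F(A)`, namely the closed span of `δ(A)`, is complemented: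
there is a bounded linear projection of `X` onto it. -/
theorem stmt5 {M : Type u} [MetricSpace M] [CompleteSpace M]
    (A : Set M) (hA : A.Nonempty) (hclosed : IsClosed A) (hbdd : Bornology.IsBounded A)
    (hsep : 0 < ⨅ (x : A) (y : ↥(Aᶜ)), edist (x : M) (y : M))
    (x₀ : M) (hx₀ : x₀ ∈ A)
    (X : Type u) [NormedAddCommGroup X] [NormedSpace ℝ X] [CompleteSpace X]
    (δ : M → X) (hfree : IsFreeSpace (fun a b : M => dist a b) x₀ X δ) :
    ∃ P : X →L[ℝ] X,
      (∀ w ∈ (Submodule.span ℝ (δ '' A)).topologicalClosure, P w = w) ∧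
      ∀ v : X, P v ∈ (Submodule.span ℝ (δ '' A)).topologicalClosure := by
  classical
  -- separation constant θ
  obtain ⟨θ, hθ0, hθ⟩ : ∃ θ : ℝ, 0 < θ ∧ ∀ x ∈ A, ∀ y ∉ A, θ ≤ dist x y := by
    set ε : ENNReal := min (⨅ (x : A) (y : ↥(Aᶜ)), edist (x : M) (y : M)) 1 with hε
    have hε0 : 0 < ε := lt_min hsep one_pos
    have hεtop : ε ≠ ⊤ := ne_top_of_le_ne_top (by simp) (min_le_right _ _)
    refine ⟨ε.toReal, ENNReal.toReal_pos hε0.ne' hεtop, fun x hx y hy => ?_⟩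
    have h1 : ε ≤ edist x y := by
      refine le_trans (min_le_left _ _) ?_
      exact le_trans (iInf_le _ (⟨x, hx⟩ : A)) (iInf_le _ (⟨y, hy⟩ : ↥(Aᶜ)))
    rw [dist_edist]
    exact ENNReal.toReal_mono (edist_ne_top x y) h1
  set D : ℝ := Metric.diam A with hD
  set L : ℝ := max 1 (D / θ) with hLdef
  have hL1 : (1 : ℝ) ≤ L := le_max_left _ _
  have hL0 : (0 : ℝ) < L := lt_of_lt_of_le one_pos hL1
  set r : M → M := fun x => if x ∈ A then x else x₀ with hr
  have hrA : ∀ x ∈ A, r x = x := fun x hx => if_pos hx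
  have hrmem : ∀ x, r x ∈ A := by
    intro x
    by_cases hx : x ∈ A
    · rw [hrA x hx]; exact hx
    · rw [hr]; simp only [if_neg hx]; exact hx₀
  -- f ∘ r is L-Lipschitz for 1-Lipschitz f vanishing at x₀
  have hLipr : ∀ f : M → ℝ, LipWith (fun a b : M => dist a b) 1 f → f x₀ = 0 →
      LipWith (fun a b : M => dist a b) L (fun x => f (r x)) := by
    intro f hf hf0 x y
    show |f (r x) - f (r y)| ≤ L * dist x y
    have key : ∀ u v : M, u ∈ A → v ∉ A → |f (r u) - f (r v)| ≤ L * dist u v := by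
      intro u v hu hv
      rw [hrA u hu, hr]
      simp only [if_neg hv]
      have h1 : |f u - f x₀| ≤ 1 * dist u x₀ := hf u x₀
      have h2 : dist u x₀ ≤ D := Metric.dist_le_diam_of_mem hbdd hu hx₀
      have h3 : D = (D / θ) * θ := (div_mul_cancel₀ D hθ0.ne').symm
      have h4 : (D / θ) * θ ≤ L * θ :=
        mul_le_mul_of_nonneg_right (le_max_right _ _) hθ0.le
      have h5 : L * θ ≤ L * dist u v :=
        mul_le_mul_of_nonneg_left (hθ u hu v hv) hL0.le
      calc |f u - f x₀| ≤ 1 * dist u x₀ := h1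
        _ = dist u x₀ := one_mul _
        _ ≤ D := h2
        _ = (D / θ) * θ := h3
        _ ≤ L * θ := h4
        _ ≤ L * dist u v := h5
    by_cases hx : x ∈ A <;> by_cases hy : y ∈ A
    · rw [hrA x hx, hrA y hy]
      calc |f x - f y| ≤ 1 * dist x y := hf x y
        _ ≤ L * dist x y := mul_le_mul_of_nonneg_right hL1 dist_nonneg
    · exact key x y hx hy
    · rw [abs_sub_comm, dist_comm]; exact key y x hy hx
    · rw [hr]; simp only [if_neg hx, if_neg hy, sub_self, abs_zero]
      positivity
  set Φ : (M →₀ ℝ) →ₗ[ℝ] X := Finsupp.linearCombination ℝ δ with hΦdef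
  have hΦsum : ∀ c : M →₀ ℝ, Φ c = ∑ x ∈ c.support, c x • δ x := by
    intro c; rw [hΦdef, Finsupp.linearCombination_apply, Finsupp.sum]
  have hnorm : ∀ c : M →₀ ℝ, ‖Φ c‖ = sSup {t : ℝ | ∃ f : M → ℝ,
      LipWith (fun a b : M => dist a b) 1 f ∧ f x₀ = 0 ∧
        t = ∑ x ∈ c.support, c x * f x} := by
    intro c
    rw [hΦsum]
    exact hfree.2.2 c.support c
  -- reindexing identity
  have hreindex : ∀ (f : M → ℝ) (c : M →₀ ℝ),
      ∑ y ∈ (c.mapDomain r).support, (c.mapDomain r) y * f y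
        = ∑ x ∈ c.support, c x * f (r x) := by
    intro f c
    have h := Finsupp.linearCombination_mapDomain (R := ℝ) (v' := f) r c
    rw [Finsupp.linearCombination_apply, Finsupp.linearCombination_apply,
      Finsupp.sum, Finsupp.sum] at h
    simpa [smul_eq_mul] using h
  -- the key norm inequality
  have key : ∀ c : M →₀ ℝ, ‖Φ (c.mapDomain r)‖ ≤ L * ‖Φ c‖ := by
    intro c
    rw [hnorm, hnorm]
    have hzero : ∀ (c' : M →₀ ℝ), (0 : ℝ) ∈ {t : ℝ | ∃ f : M → ℝ,
        LipWith (fun a b : M => dist a b) 1 f ∧ f x₀ = 0 ∧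
          t = ∑ x ∈ c'.support, c' x * f x} := by
      intro c'
      refine ⟨fun _ => 0, fun x y => ?_, rfl, by simp⟩
      simp [dist_nonneg]
    have hbdd2 : BddAbove {t : ℝ | ∃ f : M → ℝ,
        LipWith (fun a b : M => dist a b) 1 f ∧ f x₀ = 0 ∧
          t = ∑ x ∈ c.support, c x * f x} := by
      refine ⟨∑ x ∈ c.support, |c x| * dist x x₀, ?_⟩
      rintro t ⟨f, hf, hf0, rfl⟩
      calc ∑ x ∈ c.support, c x * f x ≤ ∑ x ∈ c.support, |c x * f x| :=
            Finset.sum_le_sum fun x _ => le_abs_self _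
        _ = ∑ x ∈ c.support, |c x| * |f x| := by simp [abs_mul]
        _ ≤ ∑ x ∈ c.support, |c x| * dist x x₀ := by
            refine Finset.sum_le_sum fun x _ => ?_
            refine mul_le_mul_of_nonneg_left ?_ (abs_nonneg _)
            have := hf x x₀
            rw [hf0, sub_zero] at this
            simpa using this
    refine csSup_le ⟨0, hzero _⟩ ?_
    rintro t ⟨f, hf, hf0, rfl⟩
    rw [hreindex f c]
    set g : M → ℝ := fun z => L⁻¹ * f (r z) with hg
    have hgLip : LipWith (fun a b : M => dist a b) 1 g := by
      intro x y
      have h1 : |g x - g y| = L⁻¹ * |f (r x) - f (r y)| := by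
        rw [hg]; rw [← mul_sub, abs_mul, abs_of_nonneg (inv_nonneg.mpr hL0.le)]
      rw [h1]
      have h2 := hLipr f hf hf0 x y
      calc L⁻¹ * |f (r x) - f (r y)| ≤ L⁻¹ * (L * dist x y) :=
            mul_le_mul_of_nonneg_left h2 (inv_nonneg.mpr hL0.le)
        _ = dist x y := by field_simp
        _ = 1 * dist x y := (one_mul _).symm
    have hg0 : g x₀ = 0 := by
      rw [hg]; simp only [hrA x₀ hx₀, hf0, mul_zero]
    have hsum : ∑ x ∈ c.support, c x * f (r x) = L * ∑ x ∈ c.support, c x * g x := by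
      rw [Finset.mul_sum]
      refine Finset.sum_congr rfl fun x _ => ?_
      rw [hg]; field_simp
    rw [hsum]
    refine mul_le_mul_of_nonneg_left ?_ hL0.le
    exact le_csSup hbdd2 ⟨g, hgLip, hg0, rfl⟩
  -- build the projection
  set Ψ : (M →₀ ℝ) →ₗ[ℝ] X := Φ.comp (Finsupp.lmapDomain ℝ ℝ r) with hΨdef
  have hΨapp : ∀ c : M →₀ ℝ, Ψ c = Φ (c.mapDomain r) := fun c => rfl
  have hker : LinearMap.ker Φ ≤ LinearMap.ker Ψ := by
    intro c hc
    rw [LinearMap.mem_ker] at hc ⊢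
    have := key c
    rw [hc, norm_zero, mul_zero] at this
    rw [hΨapp]
    exact norm_le_zero_iff.mp this
  set E : Submodule ℝ X := LinearMap.range Φ with hE
  set g₀ : ((M →₀ ℝ) ⧸ LinearMap.ker Φ) →ₗ[ℝ] X := (LinearMap.ker Φ).liftQ Ψ hker with hg₀
  set g : ↥E →ₗ[ℝ] X := g₀.comp (Φ.quotKerEquivRange.symm : ↥E →ₗ[ℝ] _) with hgdef
  have hgval : ∀ (c : M →₀ ℝ) (h : Φ c ∈ E), g ⟨Φ c, h⟩ = Φ (c.mapDomain r) := by
    intro c h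
    have h1 : Φ.quotKerEquivRange.symm ⟨Φ c, h⟩ = Submodule.Quotient.mk c := by
      rw [LinearEquiv.symm_apply_eq]
      exact Subtype.ext rfl
    rw [hgdef]
    simp only [LinearMap.comp_apply, LinearEquiv.coe_coe, h1]
    rw [hg₀, Submodule.liftQ_apply, hΨapp]
  have hgbound : ∀ v : ↥E, ‖g v‖ ≤ L * ‖v‖ := by
    rintro ⟨v, hv⟩
    obtain ⟨c, rfl⟩ := hv
    rw [hgval c (LinearMap.mem_range_self Φ c)]
    exact key c
  set G : ↥E →L[ℝ] X := g.mkContinuous L hgbound with hG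
  have hEdense : Dense (E : Set X) := by
    have hEeq : E = Submodule.span ℝ (Set.range δ) := by
      rw [hE, hΦdef, Finsupp.range_linearCombination]
    rw [hEeq]
    exact Submodule.dense_iff_topologicalClosure_eq_top.mpr hfree.2.1
  have hdenseR : DenseRange (E.subtypeL : ↥E →L[ℝ] X) := hEdense.denseRange_val
  have huind : IsUniformInducing (E.subtypeL : ↥E →L[ℝ] X) :=
    isUniformEmbedding_subtype_val.isUniformInducing
  set P : X →L[ℝ] X := G.extend E.subtypeL with hP
  have hPΦ : ∀ c : M →₀ ℝ, P (Φ c) = Φ (c.mapDomain r) := by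
    intro c
    have h1 := ContinuousLinearMap.extend_eq G (e := E.subtypeL) hdenseR huind
      ⟨Φ c, LinearMap.mem_range_self Φ c⟩
    rw [← hP] at h1
    have h2 : E.subtypeL ⟨Φ c, LinearMap.mem_range_self Φ c⟩ = Φ c := rfl
    rw [h2] at h1
    rw [h1, hG, LinearMap.mkContinuous_apply, hgval]
  set N := (Submodule.span ℝ (δ '' A)).topologicalClosure with hN
  have hmemspan : ∀ c : M →₀ ℝ, Φ (c.mapDomain r) ∈ Submodule.span ℝ (δ '' A) := by
    intro c
    rw [hΦsum]
    refine Submodule.sum_mem _ fun y hy => ?_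
    refine Submodule.smul_mem _ _ (Submodule.subset_span ?_)
    have hy2 := Finsupp.mapDomain_support hy
    rw [Finset.mem_image] at hy2
    obtain ⟨x, _, rfl⟩ := hy2
    exact ⟨r x, hrmem x, rfl⟩
  refine ⟨P, ?_, ?_⟩
  · -- P = id on N
    intro w hw
    have hfix : ∀ x ∈ A, P (δ x) = δ x := by
      intro x hx
      have h1 := hPΦ (Finsupp.single x 1)
      rw [Finsupp.mapDomain_single, hrA x hx] at h1
      have h2 : Φ (Finsupp.single x 1) = δ x := by
        rw [hΦdef, Finsupp.linearCombination_single, one_smul]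
      rw [h2] at h1
      exact h1
    have hspan : ∀ w ∈ Submodule.span ℝ (δ '' A), P w = w := by
      intro w hw
      have hle : Submodule.span ℝ (δ '' A) ≤
          LinearMap.eqLocus (P : X →ₗ[ℝ] X) LinearMap.id := by
        rw [Submodule.span_le]
        rintro _ ⟨x, hx, rfl⟩
        exact hfix x hx
      exact hle hw
    have hclosedT : IsClosed {v : X | P v = v} :=
      isClosed_eq P.continuous continuous_id
    have hsub : (Submodule.span ℝ (δ '' A) : Set X) ⊆ {v : X | P v = v} := hspan
    have hw2 : w ∈ closure (Submodule.span ℝ (δ '' A) : Set X) := hw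
    exact closure_minimal hsub hclosedT hw2
  · -- range of P
    intro v
    have hclosedS : IsClosed (P ⁻¹' (N : Set X)) :=
      (Submodule.isClosed_topologicalClosure _).preimage P.continuous
    have hsub : (E : Set X) ⊆ P ⁻¹' (N : Set X) := by
      rintro _ ⟨c, rfl⟩
      show P (Φ c) ∈ (N : Set X)
      rw [hPΦ c]
      exact Submodule.le_topologicalClosure _ (hmemspan c)
    have hdense2 : Dense (P ⁻¹' (N : Set X)) := hEdense.mono hsub
    have : P ⁻¹' (N : Set X) = Set.univ := by
      rw [← hclosedS.closure_eq, hdense2.closure_eq]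
    have hv : v ∈ P ⁻¹' (N : Set X) := by rw [this]; trivial
    exact hv
end

section
/- Let T be a locally compact, separable and metrisable topological space, let d ∈ M^T, let ε > 0, let K ⊆ T be a compact subset, let {K_1, …, K_m} be a partition of K into nonempty clopen subsets with D(K_i) < ε/2 for all i (diameter with respect to d), and let d_K be a metric on K compatible with its topology such that sup_{(x,y)∈K²} |d_K(x,y) − d(x,y)| < ε and d_K(x,y) = D(K_i, K_j) whenever x ∈ K_i, y ∈ K_j, i ≠ j (where D(K_i,K_j) = sup{d(u,v) : u ∈ K_i, v ∈ K_j}). Set C = K ∪ {x ∈ T : d(x,K) ≥ ε}, and define d_C : C² → [0,∞) by: d_C(x,y) = d_K(x,y) if x,y ∈ K; d_C(x,y) = D(x, K_i) + ε/2 if x ∈ C\K and y ∈ K_i; d_C(x,y) = D(y, K_i) + ε/2 if x ∈ K_i and y ∈ C\K; and d_C(x,y) = d(x,y) if x,y ∈ C\K. Then sup_{(x,y)∈C²} min(1, |d_C(x,y) − d(x,y)|) ≤ ε; indeed |d_C(x,y) − d(x,y)| < ε for all x,y ∈ C. -/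
/-- `D(A,B) = sup {d x y : x ∈ A, y ∈ B}`. -/
noncomputable def supD {T : Type*} (d : T → T → ℝ) (A B : Set T) : ℝ :=
  sSup {r : ℝ | ∃ x ∈ A, ∃ y ∈ B, r = d x y}

/-- `d(x,A) = inf {d x y : y ∈ A}`. -/
noncomputable def infD {T : Type*} (d : T → T → ℝ) (x : T) (A : Set T) : ℝ :=
  sInf {r : ℝ | ∃ y ∈ A, r = d x y}

lemma isMetric_nonneg {T : Type*} (d : T → T → ℝ) (h : IsMetric d) (x y : T) : 0 ≤ d x y := by
  obtain ⟨h0, hs, ht⟩ := h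
  have h1 := ht x y x
  have h2 : d x x = 0 := (h0 x x).2 rfl
  have h3 := hs x y
  linarith

lemma isMetric_continuous {T : Type*} [TopologicalSpace T] (d : T → T → ℝ)
    (h : IsMetric d) (hc : Compatible T d) :
    Continuous fun p : T × T => d p.1 p.2 := by
  obtain ⟨h0, hs, ht⟩ := h
  rw [continuous_iff_continuousAt]
  rintro ⟨a, b⟩
  rw [ContinuousAt, Metric.tendsto_nhds]
  intro δ hδ
  have hopen : ∀ c : T, ∀ r : ℝ, IsOpen {x : T | d c x < r} := by
    intro c r
    rw [hc]
    intro x hx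
    refine ⟨r - d c x, by simpa using hx, fun y hy => ?_⟩
    have := ht c x y
    simp only [Set.mem_setOf_eq] at *
    linarith
  have hU : {x : T | d a x < δ/2} ×ˢ {x : T | d b x < δ/2} ∈ nhds (a, b) := by
    apply prod_mem_nhds
    · exact (hopen a (δ/2)).mem_nhds (by simp [(h0 a a).2 rfl]; linarith)
    · exact (hopen b (δ/2)).mem_nhds (by simp [(h0 b b).2 rfl]; linarith)
  filter_upwards [hU] with p hp
  obtain ⟨hp1, hp2⟩ := hp
  simp only [Set.mem_setOf_eq] at hp1 hp2
  rw [Real.dist_eq, abs_lt]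
  have t1 := ht p.1 a p.2
  have t2 := ht a b p.2
  have t3 := ht a p.1 b
  have t4 := ht p.1 p.2 b
  have s1 := hs a p.1
  have s2 := hs b p.2
  have s3 := hs p.2 b
  constructor <;> linarith

lemma supD_single_bounds {T : Type*} (d : T → T → ℝ) (hmet : IsMetric d)
    (A : Set T) (z y : T) (hy : y ∈ A) (M : ℝ)
    (hM : ∀ v ∈ A, ∀ w ∈ A, d v w ≤ M) :
    d z y ≤ supD d {z} A ∧ supD d {z} A ≤ d z y + supD d A A := by
  have htri := hmet.2.2
  have hbdd2 : BddAbove {r : ℝ | ∃ u ∈ A, ∃ v ∈ A, r = d u v} := by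
    refine ⟨M, ?_⟩
    rintro r ⟨u, hu, v, hv, rfl⟩
    exact hM u hu v hv
  have hbdd1 : BddAbove {r : ℝ | ∃ u ∈ ({z} : Set T), ∃ v ∈ A, r = d u v} := by
    refine ⟨d z y + M, ?_⟩
    rintro r ⟨u, hu, v, hv, rfl⟩
    rcases hu with rfl
    have := htri u y v
    have := hM y hy v hv
    linarith
  unfold supD
  constructor
  · exact le_csSup hbdd1
      (show d z y ∈ {r : ℝ | ∃ u ∈ ({z} : Set T), ∃ v ∈ A, r = d u v} from ⟨z, rfl, y, hy, rfl⟩)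
  · have hne : Set.Nonempty {r : ℝ | ∃ u ∈ ({z} : Set T), ∃ v ∈ A, r = d u v} :=
      ⟨d z y, z, rfl, y, hy, rfl⟩
    apply csSup_le hne
    rintro r ⟨u, hu, v, hv, rfl⟩
    rcases hu with rfl
    have h1 := htri u y v
    have h2 : d y v ≤ supD d A A :=
      le_csSup hbdd2 (show d y v ∈ {r : ℝ | ∃ u ∈ A, ∃ w ∈ A, r = d u w} from ⟨y, hy, v, hv, rfl⟩)
    unfold supD at h2
    linarith

/-- **Statement 11.** The metric `d_C` satisfies `ρ_C(d_C, d|_{C²}) ≤ ε`; indeed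
`|d_C(x,y) − d(x,y)| < ε` for all `x, y ∈ C`. -/
theorem stmt11
    {T : Type*} [TopologicalSpace T] [LocallyCompactSpace T]
    [TopologicalSpace.SeparableSpace T] [TopologicalSpace.MetrizableSpace T]
    (d : T → T → ℝ) (hd : ProperCompatMetric T d) (ε : ℝ) (hε : 0 < ε)
    (K : Set T) (hKcpt : IsCompact K)
    (m : ℕ) (hm : 0 < m) (Ki : Fin m → Set T)
    (hsub : ∀ i, Ki i ⊆ K) (hne : ∀ i, (Ki i).Nonempty)
    (hdisj : ∀ i j, i ≠ j → Disjoint (Ki i) (Ki j)) (hcover : (⋃ i, Ki i) = K)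
    (hclopen : ∀ i, IsClopen {x : ↥K | (x : T) ∈ Ki i})
    (hdiam : ∀ i, supD d (Ki i) (Ki i) < ε / 2)
    (dK : ↥K → ↥K → ℝ) (hdK : IsMetric dK) (hdKc : Compatible ↥K dK)
    (hclose : sSup {r : ℝ | ∃ x y : ↥K, r = |dK x y - d (x : T) (y : T)|} < ε)
    (heq : ∀ i j, i ≠ j → ∀ x y : ↥K, (x : T) ∈ Ki i → (y : T) ∈ Ki j →
      dK x y = supD d (Ki i) (Ki j))
    (C : Set T) (hC : C = K ∪ {x : T | ε ≤ infD d x K})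
    (dC : ↥C → ↥C → ℝ)
    (hdC1 : ∀ (x y : ↥C) (hx : (x : T) ∈ K) (hy : (y : T) ∈ K),
      dC x y = dK ⟨(x : T), hx⟩ ⟨(y : T), hy⟩)
    (hdC2 : ∀ x y : ↥C, (x : T) ∉ K → ∀ i, (y : T) ∈ Ki i →
      dC x y = supD d {(x : T)} (Ki i) + ε / 2)
    (hdC3 : ∀ x y : ↥C, (y : T) ∉ K → ∀ i, (x : T) ∈ Ki i →
      dC x y = supD d {(y : T)} (Ki i) + ε / 2)
    (hdC4 : ∀ x y : ↥C, (x : T) ∉ K → (y : T) ∉ K → dC x y = d (x : T) (y : T))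
    : (⨆ p : ↥C × ↥C, min 1 |dC p.1 p.2 - d (p.1 : T) (p.2 : T)|) ≤ ε ∧
      ∀ x y : ↥C, |dC x y - d (x : T) (y : T)| < ε := by
  obtain ⟨hd0, hdc, hdp⟩ := hd
  have hdcont : Continuous fun p : T × T => d p.1 p.2 := isMetric_continuous d hd0 hdc
  obtain ⟨M, hM⟩ := ((hKcpt.prod hKcpt).image hdcont).bddAbove
  have hMK : ∀ u ∈ K, ∀ v ∈ K, d u v ≤ M := fun u hu v hv =>
    hM ⟨(u, v), ⟨hu, hv⟩, rfl⟩
  have : CompactSpace ↥K := isCompact_iff_compactSpace.mp hKcpt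
  have hdKcont : Continuous fun p : ↥K × ↥K => dK p.1 p.2 := isMetric_continuous dK hdK hdKc
  have hg : Continuous fun p : ↥K × ↥K => |dK p.1 p.2 - d (p.1 : T) (p.2 : T)| := by
    apply Continuous.abs
    apply Continuous.sub hdKcont
    exact hdcont.comp (continuous_subtype_val.prodMap continuous_subtype_val)
  have hS1 : BddAbove {r : ℝ | ∃ x y : ↥K, r = |dK x y - d (x : T) (y : T)|} := by
    have heqS : {r : ℝ | ∃ x y : ↥K, r = |dK x y - d (x : T) (y : T)|} =
        Set.range (fun p : ↥K × ↥K => |dK p.1 p.2 - d (p.1 : T) (p.2 : T)|) := by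
      ext r
      constructor
      · rintro ⟨x, y, rfl⟩; exact ⟨(x, y), rfl⟩
      · rintro ⟨⟨x, y⟩, rfl⟩; exact ⟨x, y, rfl⟩
    rw [heqS]
    exact (isCompact_range hg).bddAbove
  have key : ∀ x y : ↥C, |dC x y - d (x : T) (y : T)| < ε := by
    intro x y
    by_cases hx : (x : T) ∈ K <;> by_cases hy : (y : T) ∈ K
    · rw [hdC1 x y hx hy]
      refine lt_of_le_of_lt (le_csSup hS1 ?_) hclose
      exact ⟨⟨x, hx⟩, ⟨y, hy⟩, rfl⟩
    · obtain ⟨i, hi⟩ : ∃ i, (x : T) ∈ Ki i := by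
        rw [← hcover] at hx; exact Set.mem_iUnion.mp hx
      rw [hdC3 x y hy i hi]
      obtain ⟨h1, h2⟩ := supD_single_bounds d hd0 (Ki i) (y : T) (x : T) hi M
        (fun v hv w hw => hMK v (hsub i hv) w (hsub i hw))
      have hsym : d (x : T) (y : T) = d (y : T) (x : T) := hd0.2.1 _ _
      have hdi := hdiam i
      rw [abs_lt]
      constructor <;> linarith
    · obtain ⟨i, hi⟩ : ∃ i, (y : T) ∈ Ki i := by
        rw [← hcover] at hy; exact Set.mem_iUnion.mp hy
      rw [hdC2 x y hx i hi]
      obtain ⟨h1, h2⟩ := supD_single_bounds d hd0 (Ki i) (x : T) (y : T) hi M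
        (fun v hv w hw => hMK v (hsub i hv) w (hsub i hw))
      have hdi := hdiam i
      rw [abs_lt]
      constructor <;> linarith
    · rw [hdC4 x y hx hy]
      simpa using hε
  refine ⟨?_, key⟩
  apply Real.iSup_le _ hε.le
  intro p
  exact le_trans (min_le_right _ _) (key p.1 p.2).le
end
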